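/- A properly vertex-colored digraph (G,σ) is a best match graph (BMG) if and only if the pair (R(G,σ), F(G,σ)) of its informative and forbidden triple sets is consistent and (G,σ) is color-sink-free, i.e., for every vertex x and every color s occurring on the vertices of G with s ≠ σ(x) there exists a vertex y with σ(y) = s and (x,y) ∈ E(G). -/

import Mathlib

/-- A planted phylogenetic rooted tree, encoded by a parent function on a
finite vertex set.  The root `0_T` is a fixed point of `parent`; every vertex
reaches the root by iterating `parent`; the root has exactly one child
(`planted`); and every inner vertex (non-root vertex having a child) has at
least two children (`phylo`). -/
structure PPTree where
  V : Type
  [fintypeV : Fintype V]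
  [decEqV : DecidableEq V]
  root : V
  parent : V → V
  parent_root : parent root = root
  reach : ∀ v : V, ∃ n : ℕ, parent^[n] v = root
  planted : ∃! v : V, v ≠ root ∧ parent v = root
  phylo : ∀ v : V, v ≠ root → (∃ u, parent u = v ∧ u ≠ v) →
      ∃ u w, parent u = v ∧ parent w = v ∧ u ≠ w ∧ u ≠ v ∧ w ≠ v

attribute [instance] PPTree.fintypeV PPTree.decEqV

namespace PPTree

variable (T : PPTree)

/-- `T.le x y` means `x ⪯_T y`, i.e. `y` is an ancestor of `x` (or `x = y`). -/
def le (x y : T.V) : Prop := ∃ n : ℕ, T.parent^[n] x = y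

/-- `T.lt x y` means `x ≺_T y`. -/
def lt (x y : T.V) : Prop := T.le x y ∧ x ≠ y

/-- Leaves are the `⪯_T`-minimal vertices, i.e. vertices without children. -/
def isLeaf (v : T.V) : Prop := ∀ u, T.parent u = v → u = v

/-- Inner vertices: neither leaves nor the planted root. -/
def inner (v : T.V) : Prop := v ≠ T.root ∧ ¬ T.isLeaf v

/-- The last common ancestor of two vertices: the `⪯_T`-minimal common
ancestor. -/
noncomputable def lca (x y : T.V) : T.V :=
  @Classical.epsilon _ ⟨T.root⟩
    fun v => T.le x v ∧ T.le y v ∧ ∀ w, T.le x w → T.le y w → T.le v w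

/-- The last common ancestor of a set of vertices. -/
noncomputable def lcaSet (A : Set T.V) : T.V :=
  @Classical.epsilon _ ⟨T.root⟩
    fun v => (∀ a ∈ A, T.le a v) ∧ ∀ w, (∀ a ∈ A, T.le a w) → T.le v w

/-- `ρ_T`, the unique child of the planted root. -/
noncomputable def rho : T.V := T.planted.choose

theorem rho_ne_root : T.rho ≠ T.root := T.planted.choose_spec.1.1

/-- Edges of `T`, identified with their child endpoint: the vertex `v ≠ 0_T`
represents the edge `(parent v, v)`. -/
abbrev Edge := {v : T.V // v ≠ T.root}

/-- The union `V(T) ∪ E(T)`. -/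
abbrev VE := T.V ⊕ T.Edge

/-- The ancestor order `⪯_T` extended to `V(T) ∪ E(T)`: for an edge `e = uv`
(`u` the parent of `v`), `x ⪯ e` iff `x ⪯ v`, `e ⪯ x` iff `u ⪯ x`, and
`e ⪯ f` iff the child endpoints are comparable accordingly. -/
def leVE : T.VE → T.VE → Prop
  | Sum.inl x, Sum.inl y => T.le x y
  | Sum.inl x, Sum.inr e => T.le x e.1
  | Sum.inr e, Sum.inl y => T.le (T.parent e.1) y
  | Sum.inr e, Sum.inr f => T.le e.1 f.1

def ltVE (a b : T.VE) : Prop := T.leVE a b ∧ a ≠ b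

/-- Two elements of `V(T) ∪ E(T)` are comparable. -/
def cmpVE (a b : T.VE) : Prop := T.leVE a b ∨ T.leVE b a

/-- Membership in `L(T)` for elements of `V(T) ∪ E(T)`. -/
def isLeafVE : T.VE → Prop
  | Sum.inl v => T.isLeaf v
  | Sum.inr _ => False

/-- Map an element of `V(T) ∪ E(T)` to a vertex (an edge `uv` is sent to its
child endpoint `v`). -/
def toVertex : T.VE → T.V
  | Sum.inl v => v
  | Sum.inr e => e.1

end PPTree

/-- Axioms (R0)–(R3) of a reconciliation map `μ : V(T) → V(S) ∪ E(S)`. -/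
structure IsRecon (T S : PPTree) (μ : T.V → S.VE) : Prop where
  R0 : ∀ x, μ x = Sum.inl S.root ↔ x = T.root
  R1 : ∀ x, S.isLeafVE (μ x) ↔ T.isLeaf x
  R2 : ∀ x y, T.lt y x → (∃ u, μ x = Sum.inl u) → (∃ v, μ y = Sum.inl v) → μ x ≠ μ y
  R3 : ∀ x y, T.lt y x → ¬ S.ltVE (μ x) (μ y)

/-- A reconciliation is HGT-free if the images of the endpoints of every edge
of `T` are `⪯_S`-comparable. -/
def IsHGTFree (T S : PPTree) (μ : T.V → S.VE) : Prop :=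
  ∀ v : T.V, v ≠ T.root → S.cmpVE (μ (T.parent v)) (μ v)

/-- `(T,S,μ,σ)` is a σ-reconciliation when `μ` restricted to `L(T)` equals
`σ`. -/
def SigmaCompat (T S : PPTree) (μ : T.V → S.VE) (σ : T.V → S.V) : Prop :=
  ∀ x, T.isLeaf x → μ x = Sum.inl (σ x)

/-- A time map for `T`. -/
def IsTimeMap (T : PPTree) (τ : T.V → ℝ) : Prop :=
  ∀ x y, T.lt x y → τ x < τ y

/-- Axioms (S0)–(S3) of a relaxed scenario `(T,S,μ,τ_T,τ_S)`. -/
structure IsRelaxedScenario (T S : PPTree) (μ : T.V → S.VE)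
    (τT : T.V → ℝ) (τS : S.V → ℝ) : Prop where
  timeT : IsTimeMap T τT
  timeS : IsTimeMap S τS
  S0 : ∀ x, μ x = Sum.inl S.root ↔ x = T.root
  S1 : ∀ x, S.isLeafVE (μ x) ↔ T.isLeaf x
  S2 : ∀ x v, μ x = Sum.inl v → τS v = τT x
  S3 : ∀ x (e : S.Edge), μ x = Sum.inr e → τS e.1 < τT x ∧ τT x < τS (S.parent e.1)

/-- A planted phylogenetic tree whose leaf set is (identified with) the finite
type `L` via the embedding `emb`. -/
structure LeafTree (L : Type) [Fintype L] [DecidableEq L] extends PPTree where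
  emb : L → toPPTree.V
  emb_inj : Function.Injective emb
  emb_leaf : ∀ v : L, toPPTree.isLeaf (emb v)
  emb_surj : ∀ l, toPPTree.isLeaf l → ∃ v : L, emb v = l

/-- The tree `T` displays the rooted triple `ab|c`:
`lca(a,b) ≺ lca(a,c) = lca(b,c)`. -/
def displaysTriple (T : PPTree) (a b c : T.V) : Prop :=
  T.lt (T.lca a b) (T.lca a c) ∧ T.lca a c = T.lca b c

section BMG

variable {V Y : Type} [Fintype V] [DecidableEq V]

/-- `y` is a best match of `x` in the leaf-colored tree `(T,σ)`:
`σ(x) ≠ σ(y)` and `lca(x,y) ⪯ lca(x,y')` for all leaves `y'` of the same color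
as `y`. -/
def LeafTree.bestMatch (T : LeafTree V) (σ : V → Y) (x y : V) : Prop :=
  σ x ≠ σ y ∧ ∀ y' : V, σ y' = σ y →
    T.toPPTree.le (T.toPPTree.lca (T.emb x) (T.emb y))
      (T.toPPTree.lca (T.emb x) (T.emb y'))

/-- `(G,σ)` is the best match graph `𝔅(T,σ)` of the leaf-colored tree
`(T,σ)`. -/
def Explains (T : LeafTree V) (σ : V → Y) (G : V → V → Prop) : Prop :=
  ∀ x y : V, G x y ↔ T.bestMatch σ x y

/-- The triple `ab|b'` is informative for `(G,σ)`. -/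
def Informative (G : V → V → Prop) (σ : V → Y) (a b b' : V) : Prop :=
  a ≠ b ∧ a ≠ b' ∧ b ≠ b' ∧ σ a ≠ σ b ∧ σ b = σ b' ∧ G a b ∧ ¬ G a b'

/-- The triple `ab|b'` is forbidden for `(G,σ)`. -/
def Forbidden (G : V → V → Prop) (σ : V → Y) (a b b' : V) : Prop :=
  a ≠ b ∧ a ≠ b' ∧ b ≠ b' ∧ σ a ≠ σ b ∧ σ b = σ b' ∧ G a b ∧ G a b'

end BMG

/-!
Two ancestors of a vertex `x` are comparable, so `lca(x,y)` and `lca(x,y')` are comparable, and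
`T` displays `xy'|y` exactly when `lca(x,y) ⋠ lca(x,y')`. Hence `y` is a best match of `x` iff
`σ(x) ≠ σ(y)` and no leaf `y'` of colour `σ(y)` gives a displayed triple `xy'|y`. In a BMG this makes
informative triples displayed and forbidden ones not; the finite colour classes provide a
`⪯`-minimal `lca(x,·)`, i.e. a best match of every colour. Conversely, for a tree as in the
consistency condition, an arc `(x,y)` is a best match because every competitor `y'` of colour `σ(y)`
gives an informative or a forbidden triple, and a best match `y` of `x` is an arc because
colour-sink-freeness gives an arc `(x,y')` with `σ(y') = σ(y)`, and `y' ≠ y` would make `xy'|y`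
informative.
-/

namespace PPTree

variable (T : PPTree)

theorem le_refl (x : T.V) : T.le x x := ⟨0, rfl⟩

variable {T}

theorem le_trans {x y z : T.V} (hxy : T.le x y) (hyz : T.le y z) : T.le x z := by
  obtain ⟨n, rfl⟩ := hxy
  obtain ⟨m, rfl⟩ := hyz
  exact ⟨m + n, Function.iterate_add_apply _ _ _ _⟩

theorem eq_root_of_isPeriodicPt {x : T.V} {p : ℕ} (hp : 0 < p)
    (hx : Function.IsPeriodicPt T.parent p x) : x = T.root := by
  obtain ⟨k, hk⟩ := T.reach x
  calc x = T.parent^[p * k] x := ((hx.mul_const k).eq).symm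
    _ = T.parent^[p * k - k] (T.parent^[k] x) := by
      rw [← Function.iterate_add_apply, Nat.sub_add_cancel (Nat.le_mul_of_pos_left k hp)]
    _ = T.root := by rw [hk, Function.iterate_fixed T.parent_root]

theorem le_antisymm {x y : T.V} (hxy : T.le x y) (hyx : T.le y x) : x = y := by
  obtain ⟨n, rfl⟩ := hxy
  obtain ⟨m, hm⟩ := hyx
  rcases Nat.eq_zero_or_pos n with rfl | hn
  · rfl
  have hx : x = T.root := eq_root_of_isPeriodicPt (Nat.add_pos_right m hn)
    (by rw [Function.IsPeriodicPt, Function.IsFixedPt, Function.iterate_add_apply, hm])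
  rw [hx, Function.iterate_fixed T.parent_root]

theorem le_total_of_le {x a b : T.V} (ha : T.le x a) (hb : T.le x b) :
    T.le a b ∨ T.le b a := by
  obtain ⟨n, rfl⟩ := ha
  obtain ⟨m, rfl⟩ := hb
  rcases le_total n m with h | h
  · exact Or.inl ⟨m - n, by rw [← Function.iterate_add_apply, Nat.sub_add_cancel h]⟩
  · exact Or.inr ⟨n - m, by rw [← Function.iterate_add_apply, Nat.sub_add_cancel h]⟩

theorem exists_min_image_of_ancestor {ι : Type} {x : T.V} (f : ι → T.V)
    (hf : ∀ i, T.le x (f i)) {s : Finset ι} (hs : s.Nonempty) :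
    ∃ i ∈ s, ∀ j ∈ s, T.le (f i) (f j) := by
  choose n hn using hf
  obtain ⟨i, hi, hmin⟩ := s.exists_min_image n hs
  refine ⟨i, hi, fun j hj => ⟨n j - n i, ?_⟩⟩
  rw [← hn i, ← Function.iterate_add_apply, Nat.sub_add_cancel (hmin j hj), hn j]

variable (T)

theorem exists_isLca (x y : T.V) :
    ∃ v, T.le x v ∧ T.le y v ∧ ∀ w, T.le x w → T.le y w → T.le v w := by
  classical
  have hN : ∃ n, T.le y (T.parent^[n] x) :=
    let ⟨k, hk⟩ := T.reach x
    ⟨k, hk ▸ T.reach y⟩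
  refine ⟨T.parent^[Nat.find hN] x, ⟨_, rfl⟩, Nat.find_spec hN, ?_⟩
  rintro w ⟨m, rfl⟩ hyw
  exact ⟨m - Nat.find hN, by
    rw [← Function.iterate_add_apply, Nat.sub_add_cancel (Nat.find_min' hN hyw)]⟩

theorem le_lca_left (x y : T.V) : T.le x (T.lca x y) :=
  (Classical.epsilon_spec (T.exists_isLca x y)).1

theorem le_lca_right (x y : T.V) : T.le y (T.lca x y) :=
  (Classical.epsilon_spec (T.exists_isLca x y)).2.1

variable {T}

theorem lca_le {x y w : T.V} (hx : T.le x w) (hy : T.le y w) : T.le (T.lca x y) w :=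
  (Classical.epsilon_spec (T.exists_isLca x y)).2.2 w hx hy

theorem lca_eq_of_lt {x y z : T.V} (h : T.lt (T.lca x z) (T.lca x y)) :
    T.lca x y = T.lca z y := by
  obtain ⟨hle, hne⟩ := h
  have hx : T.le x (T.lca z y) := by
    rcases le_total_of_le (T.le_lca_left z y) (T.le_lca_right x z) with hzy | hxz
    · exact absurd (le_antisymm hle (lca_le (T.le_lca_left x z)
        (le_trans (T.le_lca_right z y) hzy))) hne
    · exact le_trans (T.le_lca_left x z) hxz
  exact le_antisymm (lca_le hx (T.le_lca_right z y))
    (lca_le (le_trans (T.le_lca_right x z) hle) (T.le_lca_right x y))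

theorem displaysTriple_iff_not_le {x y z : T.V} :
    displaysTriple T x z y ↔ ¬ T.le (T.lca x y) (T.lca x z) := by
  refine ⟨fun ⟨⟨hle, hne⟩, _⟩ hge => hne (le_antisymm hle hge), fun hnle => ?_⟩
  have hle : T.le (T.lca x z) (T.lca x y) :=
    (le_total_of_le (T.le_lca_left x y) (T.le_lca_left x z)).resolve_left hnle
  have hlt : T.lt (T.lca x z) (T.lca x y) := ⟨hle, fun h => hnle (h ▸ T.le_refl _)⟩
  exact ⟨hlt, lca_eq_of_lt hlt⟩

end PPTree

open PPTree

section BMG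

variable {V Y : Type} [Fintype V] [DecidableEq V]

def ColorSinkFree (G : V → V → Prop) (σ : V → Y) : Prop :=
  ∀ x : V, ∀ s : Y, (∃ z : V, σ z = s) → s ≠ σ x → ∃ y : V, σ y = s ∧ G x y

theorem LeafTree.bestMatch_iff {T : LeafTree V} {σ : V → Y} {x y : V} :
    T.bestMatch σ x y ↔ σ x ≠ σ y ∧
      ∀ y', σ y' = σ y → ¬ displaysTriple T.toPPTree (T.emb x) (T.emb y') (T.emb y) := by
  simp only [LeafTree.bestMatch, displaysTriple_iff_not_le, not_not]

variable {T : LeafTree V} {σ : V → Y} {G : V → V → Prop}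

theorem Explains.displaysTriple_of_informative (hT : Explains T σ G) {a b b' : V}
    (h : Informative G σ a b b') :
    displaysTriple T.toPPTree (T.emb a) (T.emb b) (T.emb b') := by
  obtain ⟨-, -, -, hσab, hσbb', hGab, hGab'⟩ := h
  have hnot : ¬ T.bestMatch σ a b' := mt (hT a b').2 hGab'
  rw [LeafTree.bestMatch_iff] at hnot
  push Not at hnot
  obtain ⟨y', hy', hdisp⟩ := hnot (hσbb' ▸ hσab)
  rw [displaysTriple_iff_not_le] at hdisp ⊢
  exact fun hle => hdisp (le_trans hle (((hT a b).1 hGab).2 y' (hy'.trans hσbb'.symm)))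

theorem Explains.not_displaysTriple_of_forbidden (hT : Explains T σ G) {a b b' : V}
    (h : Forbidden G σ a b b') :
    ¬ displaysTriple T.toPPTree (T.emb a) (T.emb b) (T.emb b') := by
  obtain ⟨-, -, -, -, hσbb', -, hGab'⟩ := h
  exact (LeafTree.bestMatch_iff.1 ((hT a b').1 hGab')).2 b hσbb'

theorem Explains.colorSinkFree (hT : Explains T σ G) : ColorSinkFree G σ := by
  classical
  rintro x s ⟨z, rfl⟩ hs
  obtain ⟨y, hy, hmin⟩ := exists_min_image_of_ancestor
    (fun w => T.lca (T.emb x) (T.emb w)) (fun w => T.le_lca_left _ _)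
    (s := Finset.univ.filter fun w => σ w = σ z) ⟨z, by simp⟩
  rw [Finset.mem_filter] at hy
  refine ⟨y, hy.2, (hT x y).2 ⟨hy.2 ▸ hs.symm, fun y' hy' => hmin y' ?_⟩⟩
  simpa [hy.2] using hy'

theorem explains_of_consistent_of_colorSinkFree (hproper : ∀ x y : V, G x y → σ x ≠ σ y)
    (hR : ∀ a b b' : V, Informative G σ a b b' →
      displaysTriple T.toPPTree (T.emb a) (T.emb b) (T.emb b'))
    (hF : ∀ a b b' : V, Forbidden G σ a b b' →
      ¬ displaysTriple T.toPPTree (T.emb a) (T.emb b) (T.emb b'))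
    (hsink : ColorSinkFree G σ) :
    Explains T σ G := by
  intro x y
  rw [LeafTree.bestMatch_iff]
  constructor
  · intro hxy
    have hσxy := hproper x y hxy
    refine ⟨hσxy, fun y' hy' hdisp => ?_⟩
    have hσxy' : σ x ≠ σ y' := hy' ▸ hσxy
    have hyy' : y' ≠ y := by
      rintro rfl
      exact displaysTriple_iff_not_le.1 hdisp (T.le_refl _)
    by_cases hxy' : G x y'
    · exact hF x y' y ⟨ne_of_apply_ne σ hσxy', ne_of_apply_ne σ hσxy, hyy', hσxy', hy', hxy', hxy⟩
        hdisp
    · have hinf : Informative G σ x y y' :=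
        ⟨ne_of_apply_ne σ hσxy, ne_of_apply_ne σ hσxy', hyy'.symm, hσxy, hy'.symm, hxy, hxy'⟩
      exact displaysTriple_iff_not_le.1 hdisp (hR x y y' hinf).1.1
  · rintro ⟨hσxy, hbest⟩
    by_contra hxy
    obtain ⟨y', hy', hxy'⟩ := hsink x (σ y) ⟨y, rfl⟩ hσxy.symm
    have hyy' : y' ≠ y := fun h => hxy (h ▸ hxy')
    have hσxy' : σ x ≠ σ y' := hy' ▸ hσxy
    exact hbest y' hy' (hR x y' y
      ⟨ne_of_apply_ne σ hσxy', ne_of_apply_ne σ hσxy, hyy', hσxy', hy', hxy', hxy⟩)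

end BMG

/-- A properly vertex-colored digraph `(G,σ)` is a best match
graph iff the pair `(R(G,σ), F(G,σ))` of informative and forbidden triple sets
is consistent (some tree on the leaf set `V` displays all informative and no
forbidden triples) and `(G,σ)` is color-sink-free. -/
theorem bmg_characterization
    {V Y : Type} [Fintype V] [DecidableEq V]
    (G : V → V → Prop) (σ : V → Y)
    (hproper : ∀ x y : V, G x y → σ x ≠ σ y) :
    (∃ T : LeafTree V, Explains T σ G) ↔
      ((∃ T : LeafTree V,
          (∀ a b b' : V, Informative G σ a b b' →
              displaysTriple T.toPPTree (T.emb a) (T.emb b) (T.emb b')) ∧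
          (∀ a b b' : V, Forbidden G σ a b b' →
              ¬ displaysTriple T.toPPTree (T.emb a) (T.emb b) (T.emb b'))) ∧
       (∀ x : V, ∀ s : Y, (∃ z : V, σ z = s) → s ≠ σ x →
          ∃ y : V, σ y = s ∧ G x y)) := by
  constructor
  · rintro ⟨T, hT⟩
    exact ⟨⟨T, fun _ _ _ => hT.displaysTriple_of_informative,
      fun _ _ _ => hT.not_displaysTriple_of_forbidden⟩, hT.colorSinkFree⟩
  · rintro ⟨⟨T, hR, hF⟩, hsink⟩
    exact ⟨T, explains_of_consistent_of_colorSinkFree hproper hR hF hsink⟩
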